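/- Let A be a unital algebra, π : A → B(X ⊕ X) a representation preserving the grading, F = [[0, F₋],[F₊, 0]] an even Banach Fredholm module over A with grading γ = diag(−Id, Id): that is, F² − Id is compact and [F, π(a)] is compact for all a ∈ A. Then for every idempotent e ∈ A, the operator π₊(e) F₊ π₊(e), viewed as an operator from π₊(e)(X₊) to π₋(e)(X₋), is Fredholm. -/

import Mathlib

noncomputable section

/-- A bounded operator between Banach spaces is Fredholm if its kernel and cokernel
are finite-dimensional. -/
def IsFredholm {X Y : Type*} [NormedAddCommGroup X] [NormedSpace ℂ X]
    [NormedAddCommGroup Y] [NormedSpace ℂ Y] (T : X →L[ℂ] Y) : Prop :=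
  FiniteDimensional ℂ (LinearMap.ker (T : X →ₗ[ℂ] Y)) ∧ FiniteDimensional ℂ (Y ⧸ LinearMap.range (T : X →ₗ[ℂ] Y))

/-! Write `P = π₊(e)`, `Q = π₋(e)`, `T = F₊`, `S = F₋`. On `range P` the compression
`(P S Q) (Q T P) - 1` is the compression of `S T - 1 + (S Q - P S) T`, which is compact, and
symmetrically on `range Q`; so the compression of `T` is invertible modulo compact operators.
Atkinson's theorem then applies, in the form that reduces it to the Riesz theory of `1 - K`
for compact `K`: finite-dimensional kernel (the identity of `ker (1 - K)` is compact), closed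
range (`1 - K` is bounded below on a closed complement of its kernel), and finite-dimensional
cokernel (the quotient map kills `1 - K`, so it agrees with the compact map `mkQ ∘ K`). -/

namespace IsCompactOperator

open Filter Topology

variable {𝕜 Y : Type*} [RCLike 𝕜] [NormedAddCommGroup Y] [NormedSpace 𝕜 Y] {K : Y →L[𝕜] Y}

theorem finiteDimensional_ker_one_sub (hK : IsCompactOperator K) :
    FiniteDimensional 𝕜 (1 - K).ker := by
  have hfix : ∀ x ∈ (1 - K).ker, K x = x := fun x hx => (sub_eq_zero.1 hx).symm
  have hmaps : ∀ x ∈ (1 - K).ker, K x ∈ (1 - K).ker := fun x hx => (hfix x hx).symm ▸ hx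
  have hid : (id : _ → _) = (K : Y →ₗ[𝕜] Y).restrict hmaps :=
    funext fun x => Subtype.ext (hfix x x.2).symm
  apply FiniteDimensional.of_isCompactOperator_id
  rw [hid]
  exact hK.restrict hmaps (ContinuousLinearMap.isClosed_ker _)

theorem exists_antilipschitzWith_one_sub_comp_subtypeL (hK : IsCompactOperator K)
    {M : Submodule 𝕜 Y} (hM : IsClosed (M : Set Y)) (hMK : Disjoint M (1 - K).ker) :
    ∃ c, AntilipschitzWith c ((1 - K) ∘L M.subtypeL) := by
  rw [antilipschitzWith_iff_exists_mul_le_norm]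
  by_contra! h
  have hseq : ∀ n : ℕ, ∃ u : M, ‖u‖ = 1 ∧ ‖((1 - K) ∘L M.subtypeL) u‖ < 1 / (n + 1) := by
    intro n
    obtain ⟨x, hx⟩ := h (1 / (n + 1)) (by positivity)
    have hx0 : x ≠ 0 := by rintro rfl; simp at hx
    refine ⟨(‖x‖⁻¹ : 𝕜) • x, norm_smul_inv_norm hx0, ?_⟩
    rw [map_smul, norm_smul, norm_inv, RCLike.norm_ofReal, abs_norm]
    calc ‖x‖⁻¹ * ‖((1 - K) ∘L M.subtypeL) x‖ < ‖x‖⁻¹ * (1 / (n + 1) * ‖x‖) := by gcongr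
      _ = 1 / (n + 1) := by field_simp [norm_ne_zero_iff.2 hx0]
  choose u hu_norm hu_small using hseq
  have hTu : Tendsto (fun n => (1 - K) (u n : Y)) atTop (𝓝 0) :=
    squeeze_zero_norm (fun n => (hu_small n).le) tendsto_one_div_add_atTop_nhds_zero_nat
  -- `u n = (1 - K) (u n) + K (u n)` converges along a subsequence along which `K (u n)` does.
  obtain ⟨C, hC, hKC⟩ := hK.image_closedBall_subset_compact 1
  obtain ⟨y, -, φ, hφ, hKu⟩ := hC.tendsto_subseq (x := fun n => K (u n : Y))
    fun n => hKC ⟨u n, mem_closedBall_zero_iff.2 (hu_norm n).le, rfl⟩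
  have hu_lim : Tendsto (fun n => (u (φ n) : Y)) atTop (𝓝 y) := by
    simpa using (hTu.comp hφ.tendsto_atTop).add hKu
  have hyM : y ∈ M := hM.mem_of_tendsto hu_lim (Eventually.of_forall fun n => (u (φ n)).2)
  have hy_norm : ‖y‖ = 1 :=
    tendsto_nhds_unique (continuous_norm.tendsto y |>.comp hu_lim)
      (tendsto_const_nhds.congr fun n => (hu_norm (φ n)).symm)
  have hy_ker : (1 - K) y = 0 :=
    tendsto_nhds_unique ((1 - K).continuous.tendsto y |>.comp hu_lim)
      (hTu.comp hφ.tendsto_atTop)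
  have : y = 0 := Submodule.disjoint_def.1 hMK y hyM hy_ker
  simp [this] at hy_norm

theorem isClosed_range_one_sub [CompleteSpace Y] (hK : IsCompactOperator K) :
    IsClosed ((1 - K).range : Set Y) := by
  have := hK.finiteDimensional_ker_one_sub
  obtain ⟨M, hM, hMK⟩ :=
    (Submodule.ClosedComplemented.of_finiteDimensional (1 - K).ker).exists_isClosed_isCompl
  have : CompleteSpace M := hM.completeSpace_coe
  obtain ⟨c, hc⟩ := hK.exists_antilipschitzWith_one_sub_comp_subtypeL hM hMK.symm.disjoint
  have hrange : (1 - K).range = ((1 - K) ∘L M.subtypeL).range := by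
    rw [ContinuousLinearMap.toLinearMap_comp, LinearMap.range_comp,
      Submodule.toLinearMap_subtypeL, Submodule.range_subtype,
      Submodule.map_eq_range_iff.2 hMK.symm.codisjoint]
  rw [hrange, LinearMap.coe_range]
  exact hc.isClosed_range (ContinuousLinearMap.uniformContinuous _)

theorem finiteDimensional_quotient_range_one_sub [CompleteSpace Y] (hK : IsCompactOperator K) :
    FiniteDimensional 𝕜 (Y ⧸ (1 - K).range) := by
  set R := (1 - K).range
  have : IsClosed (R : Set Y) := hK.isClosed_range_one_sub
  have hmkQ : ⇑R.mkQ ∘ ⇑K = R.mkQ := by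
    funext x
    exact (Submodule.Quotient.eq R).2 ⟨-x, by simp [neg_add_eq_sub]⟩
  obtain ⟨V, hV, C, hC, hVC⟩ := (isCompactOperator_iff_exists_mem_nhds_image_subset_compact _).1
    (hK.continuous_comp R.mkQL.continuous)
  apply FiniteDimensional.of_isCompactOperator_id
  refine (isCompactOperator_iff_exists_mem_nhds_image_subset_compact _).2
    ⟨R.mkQ '' V, ?_, C, hC, ?_⟩
  · simpa using R.isOpenMap_mkQ.image_mem_nhds hV
  · rintro _ ⟨_, ⟨x, hx, rfl⟩, rfl⟩
    exact hVC ⟨x, hx, congrFun hmkQ x⟩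

end IsCompactOperator

theorem IsFredholm.of_isCompactOperator_comp_sub_one {E F : Type*}
    [NormedAddCommGroup E] [NormedSpace ℂ E] [NormedAddCommGroup F] [NormedSpace ℂ F]
    [CompleteSpace F] {T : E →L[ℂ] F} {S : F →L[ℂ] E}
    (hST : IsCompactOperator ⇑(S ∘L T - 1)) (hTS : IsCompactOperator ⇑(T ∘L S - 1)) :
    IsFredholm T := by
  have hST' : IsCompactOperator ⇑(1 - S ∘L T) := by rw [← neg_sub]; exact hST.neg
  have hTS' : IsCompactOperator ⇑(1 - T ∘L S) := by rw [← neg_sub]; exact hTS.neg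
  constructor
  · have := hST'.finiteDimensional_ker_one_sub
    rw [sub_sub_cancel, ContinuousLinearMap.toLinearMap_comp] at this
    exact Submodule.finiteDimensional_of_le (LinearMap.ker_le_ker_comp T.toLinearMap S.toLinearMap)
  · have := hTS'.finiteDimensional_quotient_range_one_sub
    rw [sub_sub_cancel, ContinuousLinearMap.toLinearMap_comp] at this
    exact Module.Finite.of_surjective _
      (Submodule.factor_surjective (LinearMap.range_comp_le_range S.toLinearMap T.toLinearMap))

namespace ContinuousLinearMap

variable {R X Y : Type*} [Ring R]
  [AddCommGroup X] [Module R X] [TopologicalSpace X]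
  [AddCommGroup Y] [Module R Y] [TopologicalSpace Y]
  {P : X →L[R] X} {Q : Y →L[R] Y}

def compression (P : X →L[R] X) (Q : Y →L[R] Y) (T : X →L[R] Y) : P.range →L[R] Q.range :=
  ((Q ∘L T) ∘L P.range.subtypeL).codRestrict Q.range fun x => ⟨T x, rfl⟩

@[simp]
theorem coe_compression_apply (T : X →L[R] Y) (x : P.range) :
    (compression P Q T x : Y) = Q (T x) :=
  rfl

theorem compression_comp_sub_one [IsTopologicalAddGroup X] (hP : IsIdempotentElem P)
    (T : X →L[R] Y) (S : Y →L[R] X) :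
    compression Q P S ∘L compression P Q T - 1 =
      compression P P (S ∘L T - 1) + compression P P ((S ∘L Q - P ∘L S) ∘L T) := by
  have hPP : ∀ x, P (P x) = P x := fun x => congr($hP.eq x)
  ext ⟨_, x, rfl⟩
  simp [hPP]

theorem _root_.IsCompactOperator.compression [IsTopologicalAddGroup Y] [T1Space Y]
    (hQ : IsIdempotentElem Q) {K : X →L[R] Y} (hK : IsCompactOperator K) :
    IsCompactOperator (compression P Q K) :=
  ((hK.clm_comp Q).comp_clm _).codRestrict _ (IsIdempotentElem.isClosed_range hQ)

end ContinuousLinearMap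

theorem isFredholm_compression {X Y : Type*}
    [NormedAddCommGroup X] [NormedSpace ℂ X] [NormedAddCommGroup Y] [NormedSpace ℂ Y]
    [CompleteSpace Y] {P : X →L[ℂ] X} {Q : Y →L[ℂ] Y}
    (hP : IsIdempotentElem P) (hQ : IsIdempotentElem Q) {T : X →L[ℂ] Y} {S : Y →L[ℂ] X}
    (hST : IsCompactOperator ⇑(S ∘L T - 1)) (hTS : IsCompactOperator ⇑(T ∘L S - 1))
    (hT : IsCompactOperator ⇑(T ∘L P - Q ∘L T)) (hS : IsCompactOperator ⇑(S ∘L Q - P ∘L S)) :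
    IsFredholm (P.compression Q T) := by
  have : CompleteSpace Q.range :=
    (ContinuousLinearMap.IsIdempotentElem.isClosed_range hQ).completeSpace_coe
  refine IsFredholm.of_isCompactOperator_comp_sub_one (S := Q.compression P S) ?_ ?_
  · rw [ContinuousLinearMap.compression_comp_sub_one hP]
    exact (hST.compression hP).add ((hS.comp_clm T).compression hP)
  · rw [ContinuousLinearMap.compression_comp_sub_one hQ]
    exact (hTS.compression hQ).add ((hT.comp_clm S).compression hQ)

theorem isFredholm_eFe_general
    {A : Type*} [Ring A]
    {Xp Xm : Type*} [NormedAddCommGroup Xp] [NormedSpace ℂ Xp]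
    [NormedAddCommGroup Xm] [NormedSpace ℂ Xm] [CompleteSpace Xm]
    (πp : A →+* (Xp →L[ℂ] Xp)) (πm : A →+* (Xm →L[ℂ] Xm))
    (Fp : Xp →L[ℂ] Xm) (Fm : Xm →L[ℂ] Xp)
    (h1 : IsCompactOperator ⇑(Fm.comp Fp - 1))
    (h2 : IsCompactOperator ⇑(Fp.comp Fm - 1))
    (hc1 : ∀ a : A, IsCompactOperator ⇑(Fp.comp (πp a) - (πm a).comp Fp))
    (hc2 : ∀ a : A, IsCompactOperator ⇑(Fm.comp (πm a) - (πp a).comp Fm))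
    (e : A) (he : IsIdempotentElem e) :
    IsFredholm (ContinuousLinearMap.codRestrict
      (((πm e).comp Fp).comp (LinearMap.range (πp e : Xp →ₗ[ℂ] Xp)).subtypeL)
      (LinearMap.range (πm e : Xm →ₗ[ℂ] Xm)) (fun x => ⟨Fp x, rfl⟩)) :=
  isFredholm_compression (he.map πp) (he.map πm) h1 h2 (hc1 e) (hc2 e)

/-- Even coupling: for an even Banach Fredholm module over `A`, with off-diagonal
operator blocks `F₊ : X₊ → X₋`, `F₋ : X₋ → X₊` (so `F² − Id` is compact and all
commutators `[F, π(a)]` are compact), and any idempotent `e ∈ A`, the compression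
`π₋(e) F₊` from `π₊(e)(X₊)` to `π₋(e)(X₋)` is Fredholm. -/
theorem isFredholm_eFe
    {A : Type*} [Ring A]
    {Xp Xm : Type*} [NormedAddCommGroup Xp] [NormedSpace ℂ Xp] [CompleteSpace Xp]
    [NormedAddCommGroup Xm] [NormedSpace ℂ Xm] [CompleteSpace Xm]
    (πp : A →+* (Xp →L[ℂ] Xp)) (πm : A →+* (Xm →L[ℂ] Xm))
    (Fp : Xp →L[ℂ] Xm) (Fm : Xm →L[ℂ] Xp)
    (h1 : IsCompactOperator ⇑(Fm.comp Fp - 1))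
    (h2 : IsCompactOperator ⇑(Fp.comp Fm - 1))
    (hc1 : ∀ a : A, IsCompactOperator ⇑(Fp.comp (πp a) - (πm a).comp Fp))
    (hc2 : ∀ a : A, IsCompactOperator ⇑(Fm.comp (πm a) - (πp a).comp Fm))
    (e : A) (he : IsIdempotentElem e) :
    IsFredholm (ContinuousLinearMap.codRestrict
      (((πm e).comp Fp).comp (LinearMap.range (πp e : Xp →ₗ[ℂ] Xp)).subtypeL)
      (LinearMap.range (πm e : Xm →ₗ[ℂ] Xm)) (fun x => ⟨Fp x, rfl⟩)) :=
  isFredholm_eFe_general πp πm Fp Fm h1 h2 hc1 hc2 e he
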